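/- arXiv:1108.0199 — 2 statements merged into one kernel-verified Lean document; each statement's English description precedes it below -/
import Mathlib

section
/- Let m ≥ 4 be an integer, let α < β be real numbers with β − α < m, and let φ : [α, β] → ℝ be a nondecreasing continuous function with φ(α) < φ(β) and φ(β) − φ(α) < m. Define φ_m(θ) = (1 − (β − α)/m)·(φ(θ) − φ(α)) + ((φ(β) − φ(α))/m)·(θ − α) + φ(α) for θ ∈ [α, β]. Then φ_m is a strictly increasing continuous bijection from [α, β] onto [φ(α), φ(β)] with φ_m(α) = φ(α) and φ_m(β) = φ(β). Moreover, if 0 < ω and both [α, β] ⊆ [−ω, ω] and [φ(α), φ(β)] ⊆ [−ω, ω], then |φ_m(θ) − φ(θ)| ≤ 8ω²/m for all θ ∈ [α, β]. -/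
open MeasureTheory Set Filter Topology
open scoped NNReal ENNReal

noncomputable section

/-- A Jordan curve: the image of a continuous injective map of the unit circle into `ℂ`. -/
def IsJordanCurve (Γ : Set ℂ) : Prop :=
  ∃ f : ℂ → ℂ, ContinuousOn f (Metric.sphere (0 : ℂ) 1) ∧
    Set.InjOn f (Metric.sphere (0 : ℂ) 1) ∧ f '' Metric.sphere (0 : ℂ) 1 = Γ

/-- An `ℓ`-connected Jordan domain: a bounded open connected subset of `ℂ` whose boundary
is the union of `ℓ` pairwise disjoint Jordan curves. -/
def IsJordanDomain (ℓ : ℕ) (X : Set ℂ) : Prop :=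
  IsOpen X ∧ IsConnected X ∧ Bornology.IsBounded X ∧
    ∃ Γ : Fin ℓ → Set ℂ, (∀ i, IsJordanCurve (Γ i)) ∧
      (∀ i j, i ≠ j → Disjoint (Γ i) (Γ j)) ∧ frontier X = ⋃ i, Γ i

/-- `g₁, g₂` are weak partial derivatives of `h` on the open set `U`. -/
def HasWeakPartials (U : Set ℂ) (h g₁ g₂ : ℂ → ℂ) : Prop :=
  MeasureTheory.LocallyIntegrableOn h U ∧
    ∀ φ : ℂ → ℝ, ContDiff ℝ (⊤ : ℕ∞) φ → HasCompactSupport φ → tsupport φ ⊆ U →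
      ((∫ z in U, (fderiv ℝ φ z 1 : ℂ) * h z) = -∫ z in U, (φ z : ℂ) * g₁ z) ∧
      ((∫ z in U, (fderiv ℝ φ z Complex.I : ℂ) * h z) = -∫ z in U, (φ z : ℂ) * g₂ z)

/-- `h` has (finite) Dirichlet energy `E` on `U`, computed from weak partial derivatives. -/
def DirichletEnergyEq (U : Set ℂ) (h : ℂ → ℂ) (E : ℝ) : Prop :=
  ∃ g₁ g₂ : ℂ → ℂ, HasWeakPartials U h g₁ g₂ ∧
    MeasureTheory.IntegrableOn (fun z => ‖g₁ z‖ ^ 2 + ‖g₂ z‖ ^ 2) U ∧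
    E = ∫ z in U, (‖g₁ z‖ ^ 2 + ‖g₂ z‖ ^ 2)

/-- `h` belongs to the Sobolev class `W^{1,2}(U)`. -/
def MemW12 (U : Set ℂ) (h : ℂ → ℂ) : Prop := ∃ E : ℝ, DirichletEnergyEq U h E

/-- `h` restricts to a homeomorphism of `X` onto `Y`. -/
def IsHomeoOn (h : ℂ → ℂ) (X Y : Set ℂ) : Prop :=
  ContinuousOn h X ∧ Set.InjOn h X ∧ h '' X = Y ∧
    ∃ g : ℂ → ℂ, ContinuousOn g Y ∧ ∀ x ∈ X, g (h x) = x

/-- An inner chordarc domain: for any two points `a, b` on the same boundary component joined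
by an injective path `γ` through `Y`, some boundary subarc from `a` to `b` has length at most
`C` times the length of `γ`. -/
def IsInnerChordarc (ℓ : ℕ) (Y : Set ℂ) : Prop :=
  IsJordanDomain ℓ Y ∧
    ∃ C : ℝ≥0, ∀ a b : ℂ, a ∈ frontier Y → b ∈ connectedComponentIn (frontier Y) a →
      ∀ γ : ℝ → ℂ, ContinuousOn γ (Set.Icc 0 1) → Set.InjOn γ (Set.Icc 0 1) →
        γ 0 = a → γ 1 = b → γ '' Set.Ioo 0 1 ⊆ Y →
        ∃ σ : ℝ → ℂ, ContinuousOn σ (Set.Icc 0 1) ∧ Set.InjOn σ (Set.Icc 0 1) ∧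
          σ 0 = a ∧ σ 1 = b ∧ σ '' Set.Icc 0 1 ⊆ frontier Y ∧
          eVariationOn σ (Set.Icc 0 1) ≤ (C : ℝ≥0∞) * eVariationOn γ (Set.Icc 0 1)

/-- The squared Hilbert–Schmidt norm of a real-linear map `ℂ → ℂ`. -/
def hsNormSq (L : ℂ →L[ℝ] ℂ) : ℝ := ‖L 1‖ ^ 2 + ‖L Complex.I‖ ^ 2

/-- `H` is harmonic on the open set `U`: it is `C²` there and its Laplacian vanishes. -/
def IsHarmonicOn (H : ℂ → ℂ) (U : Set ℂ) : Prop :=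
  ContDiffOn ℝ 2 H U ∧ ∀ z ∈ U,
    fderiv ℝ (fun w => fderiv ℝ H w 1) z 1
      + fderiv ℝ (fun w => fderiv ℝ H w Complex.I) z Complex.I = 0

/-- `f` is monotone as a map from `A` onto `B`: preimages of compact connected sets
are connected. -/
def MonotoneMapOn (f : ℂ → ℂ) (A B : Set ℂ) : Prop :=
  ∀ K : Set ℂ, K ⊆ B → IsCompact K → IsConnected K → IsConnected (A ∩ f ⁻¹' K)

/-- `h` restricts to a `C^∞`-diffeomorphism of `X` onto `Y`. -/
def IsSmoothDiffeoOn (h : ℂ → ℂ) (X Y : Set ℂ) : Prop :=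
  ContDiffOn ℝ (⊤ : ℕ∞) h X ∧ Set.InjOn h X ∧ h '' X = Y ∧
    ∃ g : ℂ → ℂ, ContDiffOn ℝ (⊤ : ℕ∞) g Y ∧ ∀ x ∈ X, g (h x) = x

/-- `Φ` restricts to a `C¹`-diffeomorphism of `Y` onto `Y'`. -/
def IsC1DiffeoOn (Φ : ℂ → ℂ) (Y Y' : Set ℂ) : Prop :=
  ContDiffOn ℝ 1 Φ Y ∧ Set.InjOn Φ Y ∧ Φ '' Y = Y' ∧
    ∃ Ψ : ℂ → ℂ, ContDiffOn ℝ 1 Ψ Y' ∧ ∀ z ∈ Y, Ψ (Φ z) = z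

/-- Convergence `hk → h` in the Royden norm on `U`: uniform convergence together with
convergence of the Dirichlet energies of the differences to `0`. -/
def RoydenTendsto (U : Set ℂ) (hk : ℕ → ℂ → ℂ) (h : ℂ → ℂ) : Prop :=
  TendstoUniformlyOn hk h atTop U ∧
    ∃ E : ℕ → ℝ, (∀ k, DirichletEnergyEq U (fun z => hk k z - h z) (E k)) ∧
      Tendsto E atTop (𝓝 0)

/-- The open circular segment `S = {|ξ| < 1, cos ω < Re ξ}`. -/
def segS (ω : ℝ) : Set ℂ := {ξ : ℂ | ‖ξ‖ < 1 ∧ Real.cos ω < ξ.re}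

/-- The circular arc `𝒞 = {e^{iθ} : −ω ≤ θ ≤ ω}` of the segment. -/
def segArc (ω : ℝ) : Set ℂ :=
  {ξ : ℂ | ∃ θ : ℝ, θ ∈ Set.Icc (-ω) ω ∧ ξ = Complex.exp (θ * Complex.I)}

/-- The base `I = {cos ω + iτ : −sin ω ≤ τ ≤ sin ω}` of the segment. -/
def segBase (ω : ℝ) : Set ℂ :=
  {ξ : ℂ | ∃ τ : ℝ, τ ∈ Set.Icc (-(Real.sin ω)) (Real.sin ω) ∧
    ξ = (Real.cos ω : ℂ) + τ * Complex.I}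

/-- The complementary arc `𝐓 = {e^{iθ} : ω ≤ |θ| ≤ π}`. -/
def segT (ω : ℝ) : Set ℂ :=
  {ξ : ℂ | ∃ θ : ℝ, θ ∈ Set.Icc (-(Real.pi)) Real.pi ∧ ω ≤ |θ| ∧
    ξ = Complex.exp (θ * Complex.I)}

/-- Arclength measure on the unit circle `𝕋` (total mass `2π`). -/
def arcMeasure : MeasureTheory.Measure ℂ :=
  MeasureTheory.Measure.map (circleMap 0 1) (volume.restrict (Set.Ioc 0 (2 * Real.pi)))

/-- The convex-combination modification `φ_m` of a nondecreasing boundary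
function is a strictly increasing continuous bijection close to `φ`. -/
theorem phi_m_strictly_increasing_bijection
    (m : ℕ) (hm : 4 ≤ m) (α β : ℝ) (hab : α < β) (hspan : β - α < m)
    (φ : ℝ → ℝ) (hmono : MonotoneOn φ (Set.Icc α β)) (hcont : ContinuousOn φ (Set.Icc α β))
    (hval : φ α < φ β) (hspan' : φ β - φ α < m)
    (φm : ℝ → ℝ)
    (hdef : ∀ θ, φm θ =
      (1 - (β - α) / m) * (φ θ - φ α) + ((φ β - φ α) / m) * (θ - α) + φ α) :
    StrictMonoOn φm (Set.Icc α β) ∧ ContinuousOn φm (Set.Icc α β) ∧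
    φm '' Set.Icc α β = Set.Icc (φ α) (φ β) ∧ φm α = φ α ∧ φm β = φ β ∧
    ∀ ω : ℝ, 0 < ω → Set.Icc α β ⊆ Set.Icc (-ω) ω →
      Set.Icc (φ α) (φ β) ⊆ Set.Icc (-ω) ω →
      ∀ θ ∈ Set.Icc α β, |φm θ - φ θ| ≤ 8 * ω ^ 2 / m := by
  have hm0 : (0:ℝ) < m := by exact_mod_cast (by omega : 0 < m)
  have hm' : (m:ℝ) ≠ 0 := ne_of_gt hm0
  have hc1 : 0 < 1 - (β - α) / m := by
    have : (β - α) / m < 1 := (div_lt_one hm0).2 hspan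
    linarith
  have hc2 : 0 < (φ β - φ α) / m := div_pos (sub_pos.2 hval) hm0
  have hsm : StrictMonoOn φm (Set.Icc α β) := by
    intro x hx y hy hxy
    rw [hdef, hdef]
    have hφ : φ x ≤ φ y := hmono hx hy hxy.le
    nlinarith [mul_le_mul_of_nonneg_left hφ hc1.le]
  have hα : φm α = φ α := by rw [hdef]; ring
  have hβ : φm β = φ β := by rw [hdef]; field_simp; ring
  have hcont' : ContinuousOn φm (Set.Icc α β) := by
    have h1 : ContinuousOn (fun θ =>
        (1 - (β - α) / m) * (φ θ - φ α) + ((φ β - φ α) / m) * (θ - α) + φ α)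
        (Set.Icc α β) := by
      exact ((continuousOn_const.mul (hcont.sub continuousOn_const)).add
        (continuousOn_const.mul (continuousOn_id.sub continuousOn_const))).add
        continuousOn_const
    exact h1.congr (fun θ _ => hdef θ)
  have himg : φm '' Set.Icc α β = Set.Icc (φ α) (φ β) := by
    apply Set.Subset.antisymm
    · rintro _ ⟨θ, hθ, rfl⟩
      have hmono' := hsm.monotoneOn
      constructor
      · rw [← hα]
        exact hmono' (Set.left_mem_Icc.2 hab.le) hθ hθ.1
      · rw [← hβ]
        exact hmono' hθ (Set.right_mem_Icc.2 hab.le) hθ.2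
    · have := intermediate_value_Icc hab.le hcont'
      rwa [hα, hβ] at this
  refine ⟨hsm, hcont', himg, hα, hβ, ?_⟩
  intro ω hω hsub1 hsub2 θ hθ
  have hA : -ω ≤ α := (hsub1 (Set.left_mem_Icc.2 hab.le)).1
  have hB : β ≤ ω := (hsub1 (Set.right_mem_Icc.2 hab.le)).2
  have hFA : -ω ≤ φ α := (hsub2 (Set.left_mem_Icc.2 hval.le)).1
  have hFB : φ β ≤ ω := (hsub2 (Set.right_mem_Icc.2 hval.le)).2
  have hθ1 : φ α ≤ φ θ := hmono (Set.left_mem_Icc.2 hab.le) hθ hθ.1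
  have hθ2 : φ θ ≤ φ β := hmono hθ (Set.right_mem_Icc.2 hab.le) hθ.2
  have heq : φm θ - φ θ =
      ((φ β - φ α) * (θ - α) - (β - α) * (φ θ - φ α)) / m := by
    rw [hdef]; field_simp; ring
  rw [heq, abs_div, abs_of_pos hm0]
  gcongr
  obtain ⟨hθa, hθb⟩ := hθ
  rw [abs_le]
  constructor <;> nlinarith [mul_nonneg (sub_nonneg.2 hθ1) (sub_nonneg.2 hab.le),
    mul_nonneg (sub_nonneg.2 hθa) (sub_nonneg.2 hval.le),
    mul_le_mul (by linarith : φ β - φ α ≤ 2*ω) (by linarith : θ - α ≤ 2*ω)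
      (by linarith) (by linarith),
    mul_le_mul (by linarith : β - α ≤ 2*ω) (by linarith : φ θ - φ α ≤ 2*ω)
      (by linarith) (by linarith)]
end
end

section
/- Fix 0 < ω < π/2 and let S = {ξ ∈ ℂ : |ξ| < 1 and cos ω < Re ξ}, with arc 𝒞 = {e^{iθ} : −ω ≤ θ ≤ ω}, base I = {cos ω + iτ : −sin ω ≤ τ ≤ sin ω}, and 𝐓 = {e^{iθ} : ω ≤ |θ| ≤ π}. Let f : 𝕋 → ∂S be a continuous monotone surjection with f(e^{iω}) = e^{iω}, f(e^{−iω}) = e^{−iω}, f(−1) = cos ω, mapping 𝐓 injectively onto I, and with f(e^{iθ}) = e^{iφ(θ)} on 𝒞 for a nondecreasing continuous surjection φ : [−ω, ω] → [−ω, ω]. Let 𝐊 ⊆ 𝒞 be a compact set containing e^{iω} and e^{−iω} on which f is injective. For each integer m ≥ 4 define f_m : 𝕋 → ∂S by: f_m = f on 𝐓 ∪ 𝐊, and on each connected component {e^{iθ} : α < θ < β} of 𝒞 ∖ 𝐊 set f_m(e^{iθ}) = e^{iφ_m(θ)} where φ_m(θ) = (1 − (β − α)/m)·(φ(θ) − φ(α))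 + ((φ(β) − φ(α))/m)·(θ − α) + φ(α). Then for all ξ₁, ξ₂ ∈ 𝕋 and all m ≥ 4: |f_m(ξ₁) − f_m(ξ₂)| ≤ (5/ sin(ω/4))·|f(ξ₁) − f(ξ₂)| + 4·|ξ₁ − ξ₂|. -/
open MeasureTheory Set Filter Topology
open scoped NNReal ENNReal

noncomputable section

lemma expI_inj {a b : ℝ} (h : |a - b| < 2 * Real.pi)
    (he : Complex.exp (a * Complex.I) = Complex.exp (b * Complex.I)) : a = b := by
  rw [Complex.exp_eq_exp_iff_exists_int] at he
  obtain ⟨n, hn⟩ := he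
  have hab : a = b + n * (2 * Real.pi) := by
    have := congrArg Complex.im hn
    simpa using this
  have hn0 : n = 0 := by
    by_contra hne
    have h1 : (1 : ℝ) ≤ |(n : ℝ)| := by exact_mod_cast Int.one_le_abs hne
    have h2 : |a - b| = |(n : ℝ)| * (2 * Real.pi) := by
      rw [hab]
      rw [show b + n * (2 * Real.pi) - b = (n : ℝ) * (2 * Real.pi) by ring,
        abs_mul, _root_.abs_of_nonneg (by positivity : (0:ℝ) ≤ 2 * Real.pi)]
    nlinarith [Real.pi_pos]
  simp [hn0] at hab; linarith

lemma chord_formula (a b : ℝ) :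
    ‖Complex.exp (a * Complex.I) - Complex.exp (b * Complex.I)‖ = 2 * |Real.sin ((a - b)/2)| := by
  have key : Complex.exp (a * Complex.I) - Complex.exp (b * Complex.I)
      = Complex.exp (((a+b)/2 : ℝ) * Complex.I) *
        (Complex.exp (((a-b)/2 : ℝ) * Complex.I) - Complex.exp ((-((a-b)/2) : ℝ) * Complex.I)) := by
    rw [mul_sub, ← Complex.exp_add, ← Complex.exp_add]
    push_cast
    ring_nf
  rw [key, norm_mul]
  have h1 : ‖Complex.exp ((((a+b)/2 : ℝ)) * Complex.I)‖ = 1 := Complex.norm_exp_ofReal_mul_I _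
  rw [h1, one_mul]
  have h2 : Complex.exp (((a-b)/2 : ℝ) * Complex.I) - Complex.exp ((-((a-b)/2) : ℝ) * Complex.I)
      = ((2 * Real.sin ((a-b)/2) : ℝ)) * Complex.I := by
    rw [Complex.exp_mul_I, Complex.exp_mul_I]
    push_cast
    rw [Complex.cos_neg, Complex.sin_neg]
    ring
  rw [h2, norm_mul]
  simp only [Complex.norm_real, Real.norm_eq_abs, Complex.norm_I, mul_one, abs_mul, _root_.abs_two]

lemma chord_le_angle (a b : ℝ) :
    ‖Complex.exp (a * Complex.I) - Complex.exp (b * Complex.I)‖ ≤ |a - b| := by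
  rw [chord_formula]
  have := Real.abs_sin_le_abs (x := (a-b)/2)
  rw [abs_div, _root_.abs_two] at this
  linarith

lemma angle_le_chord {a b : ℝ} (h : |a - b| ≤ Real.pi) :
    |a - b| ≤ Real.pi / 2 * ‖Complex.exp (a * Complex.I) - Complex.exp (b * Complex.I)‖ := by
  rw [chord_formula]
  have h1 : 2 / Real.pi * |(a-b)/2| ≤ |Real.sin ((a-b)/2)| := by
    apply Real.mul_abs_le_abs_sin
    rw [abs_div]
    rw [_root_.abs_two]
    linarith
  rw [abs_div, _root_.abs_two] at h1
  have hπ := Real.pi_pos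
  rw [div_mul_eq_mul_div, div_le_iff₀ hπ] at h1
  nlinarith


lemma lemmaG_upper {ω ψ τ : ℝ} (hω1 : 0 < ω) (hω2 : ω < Real.pi / 2)
    (hψ1 : -ω ≤ ψ) (hψ2 : ψ ≤ ω) (hτ1 : 0 ≤ τ) (hτ2 : τ ≤ Real.sin ω) :
    Real.sin (ω/4) * (ω - ψ) ≤
      4 * ‖Complex.exp (ψ * Complex.I) - ((Real.cos ω : ℂ) + τ * Complex.I)‖ := by
  have hπ := Real.pi_pos
  set z : ℂ := Complex.exp (ψ * Complex.I) - ((Real.cos ω : ℂ) + τ * Complex.I) with hz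
  have hre : z.re = Real.cos ψ - Real.cos ω := by
    simp [hz, Complex.exp_ofReal_mul_I_re, Complex.cos_ofReal_re]
  have him : z.im = Real.sin ψ - τ := by
    simp [hz, Complex.exp_ofReal_mul_I_im, Complex.cos_ofReal_im]
  have hnorm : ‖z‖ = ‖z‖ := rfl
  have hres : Real.cos ψ - Real.cos ω ≤ ‖z‖ := by
    rw [hnorm, ← hre]; exact (le_abs_self _).trans (Complex.abs_re_le_norm z)
  have hims : τ - Real.sin ψ ≤ ‖z‖ := by
    rw [hnorm]
    calc τ - Real.sin ψ ≤ |z.im| := by rw [him, abs_sub_comm]; exact le_abs_self _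
    _ ≤ _ := Complex.abs_im_le_norm z
  have hsin4 : 0 < Real.sin (ω/4) := Real.sin_pos_of_pos_of_lt_pi (by linarith) (by linarith)
  have hsin4le : Real.sin (ω/4) ≤ 1 := Real.sin_le_one _
  by_cases hcase : ψ ≤ -ω/2
  · have h1 : Real.sin (ω/2) ≤ Real.sin (-ψ) := by
      apply Real.sin_le_sin_of_le_of_le_pi_div_two (by linarith) (by linarith) (by linarith)
    have h2 : Real.sin (-ψ) = - Real.sin ψ := Real.sin_neg ψ
    have h3 : Real.sin (ω/4) ≤ Real.sin (ω/2) := by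
      apply Real.sin_le_sin_of_le_of_le_pi_div_two (by linarith) (by linarith) (by linarith)
    have h4 : Real.sin (ω/4) ≤ ‖z‖ := by nlinarith
    have h7 : ω - ψ ≤ 4 := by nlinarith [Real.pi_le_four]
    nlinarith [mul_le_mul h4 h7 (by linarith) (norm_nonneg z)]
  · push_neg at hcase
    have hid : Real.cos ψ - Real.cos ω
        = 2 * Real.sin ((ψ + ω)/2) * Real.sin ((ω - ψ)/2) := by
      rw [Real.cos_sub_cos]
      have : Real.sin ((ψ - ω)/2) = - Real.sin ((ω - ψ)/2) := by
        rw [← Real.sin_neg]; ring_nf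
      rw [this]; ring
    have h1 : Real.sin (ω/4) ≤ Real.sin ((ψ + ω)/2) := by
      apply Real.sin_le_sin_of_le_of_le_pi_div_two (by linarith) (by linarith) (by linarith)
    have h2 : 2 / Real.pi * ((ω - ψ)/2) ≤ Real.sin ((ω - ψ)/2) :=
      Real.mul_le_sin (by linarith) (by linarith)
    have h3 : 0 ≤ Real.sin ((ω - ψ)/2) :=
      Real.sin_nonneg_of_nonneg_of_le_pi (by linarith) (by linarith)
    have h5 : (0:ℝ) ≤ 2 / Real.pi * ((ω - ψ)/2) := mul_nonneg (by positivity) (by linarith)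
    have h6 : 0 ≤ Real.sin ((ψ + ω)/2) := le_of_lt (lt_of_lt_of_le hsin4 h1)
    have h4 : 2 * (Real.sin (ω/4) * (2 / Real.pi * ((ω - ψ)/2))) ≤ Real.cos ψ - Real.cos ω := by
      rw [hid]
      have hm := mul_le_mul h1 h2 h5 h6
      nlinarith
    have hkey : Real.sin (ω/4) * (ω - ψ) * (2 / Real.pi) ≤ ‖z‖ := by nlinarith
    have hfin : Real.sin (ω/4) * (ω - ψ) ≤ ‖z‖ * (Real.pi / 2) := by
      have := mul_le_mul_of_nonneg_right hkey (by positivity : (0:ℝ) ≤ Real.pi / 2)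
      calc Real.sin (ω/4) * (ω - ψ)
          = Real.sin (ω/4) * (ω - ψ) * (2 / Real.pi) * (Real.pi / 2) := by
            field_simp
        _ ≤ ‖z‖ * (Real.pi / 2) := this
    nlinarith [norm_nonneg z, Real.pi_le_four]

lemma lemmaG_lower {ω ψ τ : ℝ} (hω1 : 0 < ω) (hω2 : ω < Real.pi / 2)
    (hψ1 : -ω ≤ ψ) (hψ2 : ψ ≤ ω) (hτ1 : τ ≤ 0) (hτ2 : -Real.sin ω ≤ τ) :
    Real.sin (ω/4) * (ω + ψ) ≤
      4 * ‖Complex.exp (ψ * Complex.I) - ((Real.cos ω : ℂ) + τ * Complex.I)‖ := by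
  have key := lemmaG_upper hω1 hω2 (by linarith : -ω ≤ -ψ) (by linarith) (by linarith : 0 ≤ -τ)
    (by linarith)
  set z : ℂ := Complex.exp (ψ * Complex.I) - ((Real.cos ω : ℂ) + τ * Complex.I) with hz
  set w : ℂ := Complex.exp ((-ψ : ℝ) * Complex.I) - ((Real.cos ω : ℂ) + (-τ : ℝ) * Complex.I)
    with hw
  have hrez : z.re = Real.cos ψ - Real.cos ω := by
    simp [hz, Complex.exp_ofReal_mul_I_re, Complex.cos_ofReal_re]
  have himz : z.im = Real.sin ψ - τ := by
    simp [hz, Complex.exp_ofReal_mul_I_im, Complex.cos_ofReal_im]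
  have r1 : (Complex.exp ((-ψ:ℝ) * Complex.I)).re = Real.cos (-ψ) :=
    Complex.exp_ofReal_mul_I_re _
  have r2 : (Complex.exp ((-ψ:ℝ) * Complex.I)).im = Real.sin (-ψ) :=
    Complex.exp_ofReal_mul_I_im _
  have hrew : w.re = Real.cos ψ - Real.cos ω := by
    rw [hw, Complex.sub_re, r1, Real.cos_neg]; simp [Complex.cos_ofReal_re]
  have himw : w.im = -(Real.sin ψ - τ) := by
    rw [hw, Complex.sub_im, r2, Real.sin_neg]; simp [Complex.cos_ofReal_im]; ring
  have hnorm : ‖w‖ = ‖z‖ := by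
    show ‖w‖ = ‖z‖
    rw [Complex.norm_def, Complex.norm_def, Complex.normSq_apply, Complex.normSq_apply,
      hrew, himw, hrez, himz]
    ring_nf
  rw [hnorm] at key
  linarith [key]


lemma arg_expI {θ : ℝ} (h1 : -Real.pi < θ) (h2 : θ ≤ Real.pi) :
    (Complex.exp (θ * Complex.I)).arg = θ := by
  rw [Complex.exp_mul_I]
  exact Complex.arg_cos_add_sin_mul_I ⟨h1, h2⟩

lemma expI_mem_sphere (t : ℝ) : Complex.exp (t * Complex.I) ∈ Metric.sphere (0:ℂ) 1 := by
  rw [mem_sphere_zero_iff_norm]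
  exact Complex.norm_exp_ofReal_mul_I t

lemma sphere_eq_expI_arg {ξ : ℂ} (h : ξ ∈ Metric.sphere (0:ℂ) 1) :
    ξ = Complex.exp ((Complex.arg ξ : ℝ) * Complex.I) := by
  have h1 : ‖ξ‖ = 1 := by rwa [mem_sphere_zero_iff_norm] at h
  have h2 := Complex.norm_mul_exp_arg_mul_I ξ
  rw [h1] at h2
  simpa using h2.symm

lemma expI_cont : Continuous fun t : ℝ => Complex.exp (t * Complex.I) :=
  Complex.continuous_exp.comp (Complex.continuous_ofReal.mul continuous_const)

lemma gap_exists {ω : ℝ} (hω1 : 0 < ω) {K : Set ℂ} (hK : IsCompact K)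
    (hKe2 : Complex.exp ((-ω : ℝ) * Complex.I) ∈ K)
    (hKe1 : Complex.exp (ω * Complex.I) ∈ K)
    {θ : ℝ} (h1 : -ω < θ) (h2 : θ < ω) (hθ : Complex.exp (θ * Complex.I) ∉ K) :
    ∃ α β : ℝ, -ω ≤ α ∧ α < θ ∧ θ < β ∧ β ≤ ω ∧
      Complex.exp (α * Complex.I) ∈ K ∧ Complex.exp (β * Complex.I) ∈ K ∧
      ∀ t ∈ Set.Ioo α β, Complex.exp (t * Complex.I) ∉ K := by
  set A : Set ℝ := Icc (-ω) θ ∩ (fun t : ℝ => Complex.exp (t * Complex.I)) ⁻¹' K with hA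
  set B : Set ℝ := Icc θ ω ∩ (fun t : ℝ => Complex.exp (t * Complex.I)) ⁻¹' K with hB
  have hAclosed : IsClosed A := isClosed_Icc.inter (hK.isClosed.preimage expI_cont)
  have hBclosed : IsClosed B := isClosed_Icc.inter (hK.isClosed.preimage expI_cont)
  have hAne : A.Nonempty := ⟨-ω, ⟨le_refl _, le_of_lt h1⟩, hKe2⟩
  have hBne : B.Nonempty := ⟨ω, ⟨le_of_lt h2, le_refl _⟩, hKe1⟩
  have hAbdd : BddAbove A := ⟨θ, fun x hx => hx.1.2⟩
  have hBbdd : BddBelow B := ⟨θ, fun x hx => hx.1.1⟩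
  set α := sSup A with hα
  set β := sInf B with hβ
  have hαA : α ∈ A := hAclosed.csSup_mem hAne hAbdd
  have hβB : β ∈ B := hBclosed.csInf_mem hBne hBbdd
  have hαθ : α < θ := lt_of_le_of_ne hαA.1.2 (fun h => hθ (h ▸ hαA.2))
  have hθβ : θ < β := lt_of_le_of_ne hβB.1.1 (fun h => hθ (by rw [h]; exact hβB.2))
  refine ⟨α, β, hαA.1.1, hαθ, hθβ, hβB.1.2, hαA.2, hβB.2, ?_⟩
  intro t ht htK
  rcases le_total t θ with h | h
  · have htA : t ∈ A := ⟨⟨le_trans hαA.1.1 (le_of_lt ht.1), h⟩, htK⟩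
    exact absurd (le_csSup hAbdd htA) (not_le.mpr ht.1)
  · have htB : t ∈ B := ⟨⟨h, le_trans (le_of_lt ht.2) hβB.1.2⟩, htK⟩
    exact absurd (csInf_le hBbdd htB) (not_le.mpr ht.2)


def goodAngle (ω : ℝ) (φ : ℝ → ℝ) (K : Set ℂ) (mR θ v : ℝ) : Prop :=
  (Complex.exp (θ * Complex.I) ∈ K ∧ v = φ θ) ∨
  ∃ α β : ℝ, -ω ≤ α ∧ α < θ ∧ θ < β ∧ β ≤ ω ∧
    Complex.exp (α * Complex.I) ∈ K ∧ Complex.exp (β * Complex.I) ∈ K ∧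
    (∀ t ∈ Set.Ioo α β, Complex.exp (t * Complex.I) ∉ K) ∧
    v = (1 - (β - α)/mR) * (φ θ - φ α) + ((φ β - φ α)/mR) * (θ - α) + φ α

lemma phim_bounds {mR α β θ fα fθ fβ Φ : ℝ} (hm : 4 ≤ mR)
    (h1 : α < θ) (h2 : θ < β) (hba : β - α ≤ Real.pi) (hfba : fβ - fα ≤ Real.pi)
    (hfa : fα ≤ fθ) (hfb : fθ ≤ fβ)
    (hΦ : Φ = (1 - (β - α)/mR) * (fθ - fα) + ((fβ - fα)/mR) * (θ - α) + fα) :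
    (Φ - fθ ≤ Real.pi/4 * (fβ - fθ)) ∧ (fθ - Φ ≤ Real.pi/4 * (β - θ)) ∧
    (Φ - fθ ≤ Real.pi/4 * (θ - α)) ∧ (fθ - Φ ≤ Real.pi/4 * (fθ - fα)) ∧
    (fα ≤ Φ) ∧ (Φ ≤ fβ) ∧
    (Φ - fα ≤ (fθ - fα) + Real.pi/4 * (θ - α)) ∧
    (fβ - Φ ≤ (fβ - fθ) + Real.pi/4 * (β - θ)) := by
  have hm0 : (0:ℝ) < mR := by linarith
  have hπ4 : Real.pi ≤ 4 := by linarith [Real.pi_le_four]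
  set k := (β - α)/mR with hk
  set l := (fβ - fα)/mR with hl
  have hk0 : 0 ≤ k := div_nonneg (by linarith) (by linarith)
  have hl0 : 0 ≤ l := div_nonneg (by linarith) (by linarith)
  have hk4 : k ≤ Real.pi/4 := by
    rw [hk, div_le_iff₀ hm0]; nlinarith [Real.pi_pos]
  have hl4 : l ≤ Real.pi/4 := by
    rw [hl, div_le_iff₀ hm0]; nlinarith [Real.pi_pos]
  have hk1 : k ≤ 1 := by linarith
  have e1 : Φ - fθ = k * (fβ - fθ) - l * (β - θ) := by
    rw [hΦ, hk, hl]; field_simp; ring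
  have e2 : Φ - fθ = l * (θ - α) - k * (fθ - fα) := by
    rw [hΦ, hk, hl]; field_simp; ring
  have e3 : Φ - fα = (1 - k) * (fθ - fα) + l * (θ - α) := by
    rw [hΦ, hk, hl]; ring
  have e4 : fβ - Φ = (1 - k) * (fβ - fθ) + l * (β - θ) := by
    rw [hΦ, hk, hl]; field_simp; ring
  have p1 : 0 ≤ l * (β - θ) := mul_nonneg hl0 (by linarith)
  have p2 : 0 ≤ k * (fθ - fα) := mul_nonneg hk0 (by linarith)
  have p3 : 0 ≤ l * (θ - α) := mul_nonneg hl0 (by linarith)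
  have p4 : 0 ≤ k * (fβ - fθ) := mul_nonneg hk0 (by linarith)
  have p5 : 0 ≤ (1 - k) * (fθ - fα) := mul_nonneg (by linarith) (by linarith)
  have p6 : 0 ≤ (1 - k) * (fβ - fθ) := mul_nonneg (by linarith) (by linarith)
  have q1 : k * (fβ - fθ) ≤ Real.pi/4 * (fβ - fθ) :=
    mul_le_mul_of_nonneg_right hk4 (by linarith)
  have q2 : l * (β - θ) ≤ Real.pi/4 * (β - θ) :=
    mul_le_mul_of_nonneg_right hl4 (by linarith)
  have q3 : l * (θ - α) ≤ Real.pi/4 * (θ - α) :=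
    mul_le_mul_of_nonneg_right hl4 (by linarith)
  have q4 : k * (fθ - fα) ≤ Real.pi/4 * (fθ - fα) :=
    mul_le_mul_of_nonneg_right hk4 (by linarith)
  have p7 : (1 - k) * (fθ - fα) ≤ fθ - fα := by nlinarith
  have p8 : (1 - k) * (fβ - fθ) ≤ fβ - fθ := by nlinarith
  exact ⟨by linarith, by linarith, by linarith, by linarith, by linarith, by linarith,
    by linarith, by linarith⟩

lemma phim_pair {mR α β θ₁ θ₂ fα fθ₁ fθ₂ fβ Φ₁ Φ₂ : ℝ} (hm : 4 ≤ mR)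
    (h1 : α < θ₁) (hle : θ₁ ≤ θ₂) (h2 : θ₂ < β)
    (hba : β - α ≤ Real.pi) (hfba : fβ - fα ≤ Real.pi)
    (hmono : fθ₁ ≤ fθ₂) (hfa : fα ≤ fθ₁) (hfb : fθ₂ ≤ fβ)
    (hΦ1 : Φ₁ = (1 - (β - α)/mR) * (fθ₁ - fα) + ((fβ - fα)/mR) * (θ₁ - α) + fα)
    (hΦ2 : Φ₂ = (1 - (β - α)/mR) * (fθ₂ - fα) + ((fβ - fα)/mR) * (θ₂ - α) + fα) :
    0 ≤ Φ₂ - Φ₁ ∧ Φ₂ - Φ₁ ≤ (fθ₂ - fθ₁) + Real.pi/4 * (θ₂ - θ₁) := by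
  have hm0 : (0:ℝ) < mR := by linarith
  have hπ4 : Real.pi ≤ 4 := by linarith [Real.pi_le_four]
  set k := (β - α)/mR with hk
  set l := (fβ - fα)/mR with hl
  have hk0 : 0 ≤ k := div_nonneg (by linarith) (by linarith)
  have hl0 : 0 ≤ l := div_nonneg (by linarith) (by linarith)
  have hk4 : k ≤ Real.pi/4 := by
    rw [hk, div_le_iff₀ hm0]; nlinarith [Real.pi_pos]
  have hl4 : l ≤ Real.pi/4 := by
    rw [hl, div_le_iff₀ hm0]; nlinarith [Real.pi_pos]
  have hk1 : k ≤ 1 := by linarith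
  have e : Φ₂ - Φ₁ = (1 - k) * (fθ₂ - fθ₁) + l * (θ₂ - θ₁) := by
    rw [hΦ1, hΦ2, hk, hl]; ring
  have p1 : 0 ≤ (1 - k) * (fθ₂ - fθ₁) := mul_nonneg (by linarith) (by linarith)
  have p2 : 0 ≤ l * (θ₂ - θ₁) := mul_nonneg hl0 (by linarith)
  have p3 : (1 - k) * (fθ₂ - fθ₁) ≤ fθ₂ - fθ₁ := by nlinarith
  have p4 : l * (θ₂ - θ₁) ≤ Real.pi/4 * (θ₂ - θ₁) :=
    mul_le_mul_of_nonneg_right hl4 (by linarith)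
  exact ⟨by linarith, by linarith⟩

lemma good_bound {ω mR : ℝ} {φ : ℝ → ℝ} {K : Set ℂ}
    (hω1 : 0 < ω) (hω2 : ω < Real.pi/2) (hm : 4 ≤ mR)
    (hφmono : MonotoneOn φ (Icc (-ω) ω)) (hφmem : ∀ t ∈ Icc (-ω) ω, φ t ∈ Icc (-ω) ω)
    {θ₁ θ₂ v₁ v₂ : ℝ} (hθ₁ : θ₁ ∈ Icc (-ω) ω) (hθ₂ : θ₂ ∈ Icc (-ω) ω) (hle : θ₁ ≤ θ₂)
    (g₁ : goodAngle ω φ K mR θ₁ v₁) (g₂ : goodAngle ω φ K mR θ₂ v₂) :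
    0 ≤ v₂ - v₁ ∧ v₂ - v₁ ≤ (φ θ₂ - φ θ₁) + Real.pi/4 * (θ₂ - θ₁) := by
  have hπ4 : (0:ℝ) ≤ Real.pi/4 := by linarith [Real.pi_pos]
  have h2ω : 2 * ω ≤ Real.pi := by linarith
  have hθ₁m := hθ₁; have hθ₂m := hθ₂
  simp only [mem_Icc] at hθ₁m hθ₂m
  rcases g₁ with ⟨hk₁, rfl⟩ | ⟨α₁, β₁, hα₁ω, hα₁, hβ₁, hβ₁ω, hKα₁, hKβ₁, hno₁, hv₁⟩
  · rcases g₂ with ⟨hk₂, rfl⟩ | ⟨α₂, β₂, hα₂ω, hα₂, hβ₂, hβ₂ω, hKα₂, hKβ₂, hno₂, hv₂⟩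
    · constructor
      · simpa using hφmono hθ₁ hθ₂ hle
      · have h1 := mul_nonneg hπ4 (by linarith : (0:ℝ) ≤ θ₂ - θ₁)
        have h2 := hφmono hθ₁ hθ₂ hle
        linarith
    · -- θ₁ in K, θ₂ in gap (α₂, β₂); θ₁ ≤ α₂
      have hαmem₂ : α₂ ∈ Icc (-ω) ω := ⟨by linarith, by linarith⟩
      have hβmem₂ : β₂ ∈ Icc (-ω) ω := ⟨by linarith, by linarith⟩
      have hθ₁α₂ : θ₁ ≤ α₂ := by
        by_contra hcon
        push_neg at hcon
        exact hno₂ θ₁ ⟨hcon, by linarith⟩ hk₁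
      have hrα := hφmem α₂ hαmem₂; have hrβ := hφmem β₂ hβmem₂
      simp only [mem_Icc] at hrα hrβ
      have hbd := phim_bounds hm hα₂ hβ₂ (by linarith) (by linarith)
        (hφmono hαmem₂ hθ₂ (le_of_lt hα₂)) (hφmono hθ₂ hβmem₂ (le_of_lt hβ₂)) hv₂
      have hmono1 : φ θ₁ ≤ φ α₂ := hφmono hθ₁ hαmem₂ hθ₁α₂
      have hmono2 : φ α₂ ≤ φ θ₂ := hφmono hαmem₂ hθ₂ (le_of_lt hα₂)
      constructor
      · linarith [hbd.2.2.2.2.1]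
      · have h6 := hbd.2.2.2.2.2.2.1
        have h8 : Real.pi/4 * (θ₂ - α₂) ≤ Real.pi/4 * (θ₂ - θ₁) :=
          mul_le_mul_of_nonneg_left (by linarith) hπ4
        linarith
  · have hαmem₁ : α₁ ∈ Icc (-ω) ω := ⟨by linarith, by linarith⟩
    have hβmem₁ : β₁ ∈ Icc (-ω) ω := ⟨by linarith, by linarith⟩
    have hrα₁ := hφmem α₁ hαmem₁; have hrβ₁ := hφmem β₁ hβmem₁
    simp only [mem_Icc] at hrα₁ hrβ₁
    have hbd₁ := phim_bounds hm hα₁ hβ₁ (by linarith) (by linarith)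
      (hφmono hαmem₁ hθ₁ (le_of_lt hα₁)) (hφmono hθ₁ hβmem₁ (le_of_lt hβ₁)) hv₁
    rcases g₂ with ⟨hk₂, rfl⟩ | ⟨α₂, β₂, hα₂ω, hα₂, hβ₂, hβ₂ω, hKα₂, hKβ₂, hno₂, hv₂⟩
    · -- θ₁ in gap, θ₂ in K; β₁ ≤ θ₂
      have hβ₁θ₂ : β₁ ≤ θ₂ := by
        by_contra hcon
        push_neg at hcon
        exact hno₁ θ₂ ⟨by linarith, hcon⟩ hk₂
      have hmono1 : φ β₁ ≤ φ θ₂ := hφmono hβmem₁ hθ₂ hβ₁θ₂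
      have hmono2 : φ θ₁ ≤ φ β₁ := hφmono hθ₁ hβmem₁ (le_of_lt hβ₁)
      constructor
      · linarith [hbd₁.2.2.2.2.2.1]
      · have h7 := hbd₁.2.2.2.2.2.2.2
        have h8 : Real.pi/4 * (β₁ - θ₁) ≤ Real.pi/4 * (θ₂ - θ₁) :=
          mul_le_mul_of_nonneg_left (by linarith) hπ4
        linarith
    · -- both gaps
      have hαmem₂ : α₂ ∈ Icc (-ω) ω := ⟨by linarith, by linarith⟩
      have hβmem₂ : β₂ ∈ Icc (-ω) ω := ⟨by linarith, by linarith⟩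
      have hrα₂ := hφmem α₂ hαmem₂; have hrβ₂ := hφmem β₂ hβmem₂
      simp only [mem_Icc] at hrα₂ hrβ₂
      rcases lt_or_ge θ₂ β₁ with hcase | hcase
      · -- same gap: α₁ = α₂, β₁ = β₂
        have hαeq : α₁ = α₂ := by
          rcases lt_trichotomy α₁ α₂ with h | h | h
          · exact (hno₁ α₂ ⟨h, by linarith⟩ hKα₂).elim
          · exact h
          · exact (hno₂ α₁ ⟨h, by linarith⟩ hKα₁).elim
        have hβeq : β₁ = β₂ := by
          rcases lt_trichotomy β₁ β₂ with h | h | h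
          · exact (hno₂ β₁ ⟨by linarith, h⟩ hKβ₁).elim
          · exact h
          · exact (hno₁ β₂ ⟨by linarith, h⟩ hKβ₂).elim
        subst hαeq; subst hβeq
        exact phim_pair hm hα₁ hle hcase (by linarith) (by linarith)
          (hφmono hθ₁ hθ₂ hle) (hφmono hαmem₁ hθ₁ (le_of_lt hα₁))
          (hφmono hθ₂ hβmem₁ (le_of_lt hβ₂)) hv₁ hv₂
      · -- different gaps: β₁ ≤ α₂
        have hβα : β₁ ≤ α₂ := by
          by_contra hcon
          push_neg at hcon
          exact hno₂ β₁ ⟨hcon, by linarith⟩ hKβ₁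
        have hbd₂ := phim_bounds hm hα₂ hβ₂ (by linarith) (by linarith)
          (hφmono hαmem₂ hθ₂ (le_of_lt hα₂)) (hφmono hθ₂ hβmem₂ (le_of_lt hβ₂)) hv₂
        have hm1 : φ β₁ ≤ φ α₂ := hφmono hβmem₁ hαmem₂ hβα
        have hm2 : φ θ₁ ≤ φ β₁ := hφmono hθ₁ hβmem₁ (le_of_lt hβ₁)
        have hm3 : φ α₂ ≤ φ θ₂ := hφmono hαmem₂ hθ₂ (le_of_lt hα₂)
        constructor
        · linarith [hbd₁.2.2.2.2.2.1, hbd₂.2.2.2.2.1]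
        · have h6 := hbd₂.2.2.2.2.2.2.1
          have h7 := hbd₁.2.2.2.2.2.2.2
          have hext : Real.pi/4 * (θ₂ - α₂) + Real.pi/4 * (β₁ - θ₁)
              ≤ Real.pi/4 * (θ₂ - θ₁) := by
            have := mul_le_mul_of_nonneg_left
              (by linarith : (θ₂ - α₂) + (β₁ - θ₁) ≤ θ₂ - θ₁) hπ4
            linarith
          linarith


lemma segBase_decode {ω : ℝ} {z : ℂ} (h : z ∈ segBase ω) :
    z.re = Real.cos ω ∧ |z.im| ≤ Real.sin ω ∧
      z = (Real.cos ω : ℂ) + z.im * Complex.I := by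
  obtain ⟨τ, ⟨hτ1, hτ2⟩, rfl⟩ := h
  have him : ((Real.cos ω : ℂ) + τ * Complex.I).im = τ := by simp
  have hre : ((Real.cos ω : ℂ) + τ * Complex.I).re = Real.cos ω := by simp [Complex.cos_ofReal_re]
  exact ⟨hre, by rw [him]; exact abs_le.mpr ⟨by linarith, hτ2⟩, by rw [him]⟩

lemma expI_per (t : ℝ) :
    Complex.exp ((t - 2*Real.pi : ℝ) * Complex.I) = Complex.exp (t * Complex.I) := by
  rw [show ((t - 2*Real.pi : ℝ) : ℂ) * Complex.I = t * Complex.I - 2*Real.pi*Complex.I by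
    push_cast; ring, Complex.exp_sub, Complex.exp_two_pi_mul_I, div_one]

lemma tau_sign {ω : ℝ} (hω1 : 0 < ω) (hω2 : ω < Real.pi/2) {f : ℂ → ℂ}
    (hfc : ContinuousOn f (Metric.sphere (0:ℂ) 1))
    (hTinj : Set.InjOn f (segT ω)) (hTim : f '' segT ω = segBase ω)
    (hb1 : f (Complex.exp (ω * Complex.I)) = Complex.exp (ω * Complex.I))
    (hb2 : f (Complex.exp (-ω * Complex.I)) = Complex.exp (-ω * Complex.I))
    (hb3 : f (-1) = (Real.cos ω : ℂ)) :
    ∀ t : ℝ, -Real.pi ≤ t → t ≤ Real.pi → ω ≤ |t| →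
      (0 ≤ t → 0 ≤ (f (Complex.exp (t * Complex.I))).im) ∧
      (t ≤ 0 → (f (Complex.exp (t * Complex.I))).im ≤ 0) := by
  have hπ := Real.pi_pos
  set g : ℝ → ℝ := fun t => (f (Complex.exp (t * Complex.I))).im with hg
  have hTmem : ∀ t ∈ Icc ω (2*Real.pi - ω), Complex.exp (t * Complex.I) ∈ segT ω := by
    intro t ht
    rcases le_total t Real.pi with h | h
    · exact ⟨t, ⟨by linarith [ht.1], h⟩, by
        rw [_root_.abs_of_nonneg (by linarith [ht.1])]; exact ht.1, rfl⟩
    · refine ⟨t - 2*Real.pi, ⟨by linarith [ht.2], by linarith [ht.2]⟩, ?_, (expI_per t).symm⟩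
      rw [_root_.abs_of_nonpos (by linarith [ht.2])]
      linarith [ht.2]
  have hbase : ∀ t ∈ Icc ω (2*Real.pi - ω), f (Complex.exp (t * Complex.I)) ∈ segBase ω :=
    fun t ht => hTim ▸ Set.mem_image_of_mem f (hTmem t ht)
  have gcont : ContinuousOn g (Icc ω (2*Real.pi - ω)) :=
    Complex.continuous_im.comp_continuousOn
      (hfc.comp expI_cont.continuousOn (fun t _ => expI_mem_sphere t))
  have ginj : Set.InjOn g (Icc ω (2*Real.pi - ω)) := by
    intro a ha b hb hab
    have d1 := segBase_decode (hbase a ha)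
    have d2 := segBase_decode (hbase b hb)
    have heq : f (Complex.exp (a * Complex.I)) = f (Complex.exp (b * Complex.I)) := by
      rw [d1.2.2, d2.2.2]
      show _ = (_ : ℂ)
      rw [show (f (Complex.exp (a * Complex.I))).im = g a from rfl,
        show (f (Complex.exp (b * Complex.I))).im = g b from rfl, hab]
    have := hTinj (hTmem a ha) (hTmem b hb) heq
    apply expI_inj ?_ this
    have h1 := ha.1; have h2 := ha.2; have h3 := hb.1; have h4 := hb.2
    rw [abs_sub_lt_iff]
    constructor <;> linarith
  have hgω : g ω = Real.sin ω := by
    show (f (Complex.exp ((ω:ℝ) * Complex.I))).im = _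
    rw [hb1]; exact Complex.exp_ofReal_mul_I_im ω
  have hb2' : f (Complex.exp ((-ω : ℝ) * Complex.I)) = Complex.exp ((-ω:ℝ) * Complex.I) := by
    push_cast; exact hb2
  have hg2 : g (2*Real.pi - ω) = -Real.sin ω := by
    show (f (Complex.exp ((2*Real.pi - ω : ℝ) * Complex.I))).im = _
    have hper : Complex.exp ((2*Real.pi - ω : ℝ) * Complex.I)
        = Complex.exp ((-ω : ℝ) * Complex.I) := by
      have := expI_per (2*Real.pi - ω)
      rw [show (2*Real.pi - ω) - 2*Real.pi = -ω by ring] at this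
      exact this.symm
    rw [hper, hb2', Complex.exp_ofReal_mul_I_im, Real.sin_neg]
  have hsω : 0 ≤ Real.sin ω := Real.sin_nonneg_of_nonneg_of_le_pi (by linarith) (by linarith)
  have hanti : StrictAntiOn g (Icc ω (2*Real.pi - ω)) :=
    ContinuousOn.strictAntiOn_of_injOn_Icc (by linarith) (by rw [hgω, hg2]; linarith)
      gcont ginj
  have hgπ : g Real.pi = 0 := by
    show (f (Complex.exp ((Real.pi:ℝ) * Complex.I))).im = 0
    rw [Complex.exp_pi_mul_I, hb3]
    simp
  have hπmem : Real.pi ∈ Icc ω (2*Real.pi - ω) := ⟨by linarith, by linarith⟩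
  intro t ht1 ht2 habs
  constructor
  · intro ht0
    have htω : ω ≤ t := by rwa [_root_.abs_of_nonneg ht0] at habs
    have hmem : t ∈ Icc ω (2*Real.pi - ω) := ⟨htω, by linarith⟩
    have := hanti.antitoneOn hmem hπmem ht2
    show 0 ≤ g t
    rw [← hgπ]; exact this
  · intro ht0
    have htω : ω ≤ -t := by rwa [_root_.abs_of_nonpos ht0] at habs
    set u := t + 2*Real.pi with hu
    have hue : Complex.exp (t * Complex.I) = Complex.exp (u * Complex.I) := by
      have := expI_per u
      rw [show u - 2*Real.pi = t by rw [hu]; ring] at this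
      exact this
    have humem : u ∈ Icc ω (2*Real.pi - ω) := ⟨by linarith, by linarith⟩
    have hle := hanti.antitoneOn hπmem humem (by rw [hu]; linarith)
    show (f (Complex.exp (t * Complex.I))).im ≤ 0
    rw [hue]
    show g u ≤ 0
    rw [← hgπ]; exact hle

set_option maxHeartbeats 2000000 in
/-- The chord estimate for the modified boundary homeomorphisms `f_m`:
`|f_m(ξ₁) − f_m(ξ₂)| ≤ (5 / sin(ω/4))·|f(ξ₁) − f(ξ₂)| + 4·|ξ₁ − ξ₂|`. -/
theorem chord_estimate_for_modified_boundary_maps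
    (ω : ℝ) (hω1 : 0 < ω) (hω2 : ω < Real.pi / 2)
    (f : ℂ → ℂ) (φ : ℝ → ℝ) (K : Set ℂ) (fm : ℕ → ℂ → ℂ)
    (hfc : ContinuousOn f (Metric.sphere (0 : ℂ) 1))
    (hfsurj : f '' Metric.sphere (0 : ℂ) 1 = frontier (segS ω))
    (hfmono : MonotoneMapOn f (Metric.sphere (0 : ℂ) 1) (frontier (segS ω)))
    (hb1 : f (Complex.exp (ω * Complex.I)) = Complex.exp (ω * Complex.I))
    (hb2 : f (Complex.exp (-ω * Complex.I)) = Complex.exp (-ω * Complex.I))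
    (hb3 : f (-1) = (Real.cos ω : ℂ))
    (hTinj : Set.InjOn f (segT ω)) (hTim : f '' segT ω = segBase ω)
    (hφ : ∀ θ ∈ Set.Icc (-ω) ω, f (Complex.exp (θ * Complex.I)) =
      Complex.exp (φ θ * Complex.I))
    (hφmono : MonotoneOn φ (Set.Icc (-ω) ω)) (hφcont : ContinuousOn φ (Set.Icc (-ω) ω))
    (hφsurj : φ '' Set.Icc (-ω) ω = Set.Icc (-ω) ω)
    (hK : IsCompact K) (hKsub : K ⊆ segArc ω)
    (hKe1 : Complex.exp (ω * Complex.I) ∈ K) (hKe2 : Complex.exp (-ω * Complex.I) ∈ K)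
    (hKinj : Set.InjOn f K)
    (hfm_eq : ∀ m : ℕ, 4 ≤ m → Set.EqOn (fm m) f (segT ω ∪ K))
    (hfm_def : ∀ m : ℕ, 4 ≤ m → ∀ α β : ℝ, -ω ≤ α → β ≤ ω → α < β →
      Complex.exp (α * Complex.I) ∈ K → Complex.exp (β * Complex.I) ∈ K →
      (∀ θ ∈ Set.Ioo α β, Complex.exp (θ * Complex.I) ∉ K) →
      ∀ θ ∈ Set.Ioo α β, fm m (Complex.exp (θ * Complex.I)) =
        Complex.exp (((1 - (β - α) / m) * (φ θ - φ α)
          + ((φ β - φ α) / m) * (θ - α) + φ α) * Complex.I)) :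
    ∀ m : ℕ, 4 ≤ m → ∀ ξ₁ ∈ Metric.sphere (0 : ℂ) 1, ∀ ξ₂ ∈ Metric.sphere (0 : ℂ) 1,
      ‖fm m ξ₁ - fm m ξ₂‖ ≤ (5 / Real.sin (ω / 4)) * ‖f ξ₁ - f ξ₂‖ + 4 * ‖ξ₁ - ξ₂‖ := by
  intro m hm ξ₁ hξ₁ ξ₂ hξ₂
  have hπ := Real.pi_pos
  have hπ4 : Real.pi ≤ 4 := by linarith [Real.pi_le_four]
  have hs : 0 < Real.sin (ω/4) := Real.sin_pos_of_pos_of_lt_pi (by linarith) (by linarith)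
  have hs1 : Real.sin (ω/4) ≤ 1 := Real.sin_le_one _
  have hmR : (4:ℝ) ≤ (m:ℝ) := by exact_mod_cast hm
  have h5s1 : (1:ℝ) ≤ 5 / Real.sin (ω/4) := by
    rw [le_div_iff₀ hs]; linarith
  have hφmem : ∀ t ∈ Set.Icc (-ω) ω, φ t ∈ Set.Icc (-ω) ω := by
    intro t ht
    have h := Set.mem_image_of_mem φ ht
    rwa [hφsurj] at h
  have hKe2' : Complex.exp ((-ω : ℝ) * Complex.I) ∈ K := by push_cast; exact hKe2
  -- dichotomy
  have hdich : ∀ ξ ∈ Metric.sphere (0:ℂ) 1, ξ ∈ segT ω ∪ K ∨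
      (ξ ∉ K ∧ ξ.arg ∈ Set.Ioo (-ω) ω) := by
    intro ξ hξ
    by_cases hk : ξ ∈ K
    · exact Or.inl (Set.mem_union_right _ hk)
    rcases le_or_gt ω |ξ.arg| with h | h
    · exact Or.inl (Set.mem_union_left _
        ⟨ξ.arg, ⟨(Complex.neg_pi_lt_arg ξ).le, Complex.arg_le_pi ξ⟩, h,
          sphere_eq_expI_arg hξ⟩)
    · exact Or.inr ⟨hk, Set.mem_Ioo.mpr (abs_lt.mp h)⟩
  -- arg representation of K points
  have hKrep : ∀ ξ ∈ K, ξ.arg ∈ Set.Icc (-ω) ω ∧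
      ξ = Complex.exp ((ξ.arg : ℝ) * Complex.I) := by
    intro ξ hk
    obtain ⟨θ', hθ', hξe⟩ := hKsub hk
    simp only [Set.mem_Icc] at hθ'
    have harg : ξ.arg = θ' := by
      rw [hξe]; exact arg_expI (by linarith) (by linarith)
    rw [harg]
    exact ⟨⟨hθ'.1, hθ'.2⟩, hξe⟩
  -- good data for K points
  have hKdata : ∀ ξ ∈ K, goodAngle ω φ K (m:ℝ) ξ.arg (φ ξ.arg) ∧
      fm m ξ = Complex.exp ((φ ξ.arg : ℝ) * Complex.I) := by
    intro ξ hk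
    obtain ⟨hargm, hξe⟩ := hKrep ξ hk
    refine ⟨Or.inl ⟨by rw [← hξe]; exact hk, rfl⟩, ?_⟩
    have h1 : fm m ξ = f ξ := hfm_eq m hm (Set.mem_union_right _ hk)
    rw [h1]
    conv_lhs => rw [hξe]
    exact hφ ξ.arg hargm
  -- good data for gap points
  have hGdata : ∀ ξ ∈ Metric.sphere (0:ℂ) 1, ξ ∉ K → ξ.arg ∈ Set.Ioo (-ω) ω →
      ∃ v, goodAngle ω φ K (m:ℝ) ξ.arg v ∧ fm m ξ = Complex.exp ((v:ℝ) * Complex.I) ∧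
        v - φ ξ.arg ≤ Real.pi/4 * (ω - φ ξ.arg) ∧
        φ ξ.arg - v ≤ Real.pi/4 * (ω - ξ.arg) ∧
        v - φ ξ.arg ≤ Real.pi/4 * (ξ.arg + ω) ∧
        φ ξ.arg - v ≤ Real.pi/4 * (φ ξ.arg + ω) := by
    intro ξ hsph hk hio
    have hξe := sphere_eq_expI_arg hsph
    set θ := ξ.arg with hθdef
    have hKθ : Complex.exp ((θ:ℝ) * Complex.I) ∉ K := by rw [← hξe]; exact hk
    obtain ⟨α, β, hαω, hαθ, hθβ, hβω, hKα, hKβ, hno⟩ :=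
      gap_exists hω1 hK hKe2' hKe1 hio.1 hio.2 hKθ
    set v := (1 - (β - α)/(m:ℝ)) * (φ θ - φ α) + ((φ β - φ α)/(m:ℝ)) * (θ - α) + φ α
      with hv
    have hfmv : fm m ξ = Complex.exp ((v:ℝ) * Complex.I) := by
      conv_lhs => rw [hξe]
      rw [hfm_def m hm α β hαω hβω (by linarith) hKα hKβ hno θ ⟨hαθ, hθβ⟩]
      congr 1
      rw [hv]
      push_cast
      ring
    have hαmem : α ∈ Set.Icc (-ω) ω := ⟨hαω, by linarith⟩
    have hβmem : β ∈ Set.Icc (-ω) ω := ⟨by linarith, hβω⟩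
    have hθmem : θ ∈ Set.Icc (-ω) ω := ⟨le_of_lt hio.1, le_of_lt hio.2⟩
    have hrα := hφmem α hαmem
    have hrβ := hφmem β hβmem
    have hrθ := hφmem θ hθmem
    simp only [Set.mem_Icc] at hrα hrβ hrθ
    have hbd := phim_bounds hmR hαθ hθβ (by linarith) (by linarith)
      (hφmono hαmem hθmem (le_of_lt hαθ)) (hφmono hθmem hβmem (le_of_lt hθβ)) hv
    have hπ40 : (0:ℝ) ≤ Real.pi/4 := by linarith
    refine ⟨v, Or.inr ⟨α, β, hαω, hαθ, hθβ, hβω, hKα, hKβ, hno, hv⟩, hfmv, ?_, ?_, ?_, ?_⟩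
    · exact le_trans hbd.1 (mul_le_mul_of_nonneg_left (by linarith [hrβ.2]) hπ40)
    · exact le_trans hbd.2.1 (mul_le_mul_of_nonneg_left (by linarith) hπ40)
    · exact le_trans hbd.2.2.1 (mul_le_mul_of_nonneg_left (by linarith [hrα.1]) hπ40)
    · exact le_trans hbd.2.2.2.1 (mul_le_mul_of_nonneg_left (by linarith [hrα.1]) hπ40)
  -- ordered arc-arc estimate
  have harcO : ∀ ξa ∈ Metric.sphere (0:ℂ) 1, ∀ ξb ∈ Metric.sphere (0:ℂ) 1,
      ∀ va vb : ℝ, ξa.arg ∈ Set.Icc (-ω) ω → ξb.arg ∈ Set.Icc (-ω) ω → ξa.arg ≤ ξb.arg →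
      goodAngle ω φ K (m:ℝ) ξa.arg va → goodAngle ω φ K (m:ℝ) ξb.arg vb →
      fm m ξa = Complex.exp ((va:ℝ) * Complex.I) →
      fm m ξb = Complex.exp ((vb:ℝ) * Complex.I) →
      ‖fm m ξa - fm m ξb‖ ≤ (5 / Real.sin (ω/4)) * ‖f ξa - f ξb‖ + 4 * ‖ξa - ξb‖ := by
    intro ξa hsa ξb hsb va vb hma hmb hlee hga hgb hfma hfmb
    obtain ⟨h0, hub⟩ := good_bound hω1 hω2 hmR hφmono hφmem hma hmb hlee hga hgb
    have hfva : f ξa = Complex.exp ((φ ξa.arg : ℝ) * Complex.I) := by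
      conv_lhs => rw [sphere_eq_expI_arg hsa]
      exact hφ _ hma
    have hfvb : f ξb = Complex.exp ((φ ξb.arg : ℝ) * Complex.I) := by
      conv_lhs => rw [sphere_eq_expI_arg hsb]
      exact hφ _ hmb
    have hrφa := hφmem _ hma
    have hrφb := hφmem _ hmb
    simp only [Set.mem_Icc] at hrφa hrφb hma hmb
    have hF : φ ξb.arg - φ ξa.arg ≤ Real.pi/2 * ‖f ξa - f ξb‖ := by
      rw [hfva, hfvb]
      have h1 : |φ ξa.arg - φ ξb.arg| ≤ Real.pi := by
        rw [abs_le]; constructor <;> [linarith [hrφa.2, hrφb.1]; linarith [hrφa.1, hrφb.2]]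
      have h2 := angle_le_chord h1
      calc φ ξb.arg - φ ξa.arg ≤ |φ ξa.arg - φ ξb.arg| := by
            rw [abs_sub_comm]; exact le_abs_self _
      _ ≤ _ := h2
    have hX : ξb.arg - ξa.arg ≤ Real.pi/2 * ‖ξa - ξb‖ := by
      have h1 : |ξa.arg - ξb.arg| ≤ Real.pi := by
        rw [abs_le]; constructor <;> [linarith [hma.2, hmb.1]; linarith [hma.1, hmb.2]]
      have h2 := angle_le_chord h1
      rw [← sphere_eq_expI_arg hsa, ← sphere_eq_expI_arg hsb] at h2
      calc ξb.arg - ξa.arg ≤ |ξa.arg - ξb.arg| := by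
            rw [abs_sub_comm]; exact le_abs_self _
      _ ≤ _ := h2
    have hLV : ‖fm m ξa - fm m ξb‖ ≤ vb - va := by
      rw [hfma, hfmb]
      have h1 := chord_le_angle va vb
      have h2 : |va - vb| = vb - va := by
        rw [abs_sub_comm, _root_.abs_of_nonneg (by linarith)]
      linarith
    have hc1 : Real.pi/2 * ‖f ξa - f ξb‖ ≤ (5 / Real.sin (ω/4)) * ‖f ξa - f ξb‖ := by
      apply mul_le_mul_of_nonneg_right ?_ (norm_nonneg _)
      calc Real.pi/2 ≤ 5 := by linarith
      _ ≤ _ := by rw [le_div_iff₀ hs]; nlinarith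
    have hmul : Real.pi/4 * (ξb.arg - ξa.arg) ≤ Real.pi/4 * (Real.pi/2 * ‖ξa - ξb‖) :=
      mul_le_mul_of_nonneg_left hX (by linarith)
    have hc2 : Real.pi/4 * (Real.pi/2 * ‖ξa - ξb‖) ≤ 4 * ‖ξa - ξb‖ := by
      have h1 : Real.pi/4 * (Real.pi/2) ≤ 4 := by nlinarith
      nlinarith [norm_nonneg (ξa - ξb)]
    calc ‖fm m ξa - fm m ξb‖ ≤ vb - va := hLV
    _ ≤ (φ ξb.arg - φ ξa.arg) + Real.pi/4 * (ξb.arg - ξa.arg) := hub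
    _ ≤ (5 / Real.sin (ω/4)) * ‖f ξa - f ξb‖ + 4 * ‖ξa - ξb‖ := by linarith
  -- unordered arc-arc
  have harc : ∀ ξa ∈ Metric.sphere (0:ℂ) 1, ∀ ξb ∈ Metric.sphere (0:ℂ) 1,
      ∀ va vb : ℝ, ξa.arg ∈ Set.Icc (-ω) ω → ξb.arg ∈ Set.Icc (-ω) ω →
      goodAngle ω φ K (m:ℝ) ξa.arg va → goodAngle ω φ K (m:ℝ) ξb.arg vb →
      fm m ξa = Complex.exp ((va:ℝ) * Complex.I) →
      fm m ξb = Complex.exp ((vb:ℝ) * Complex.I) →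
      ‖fm m ξa - fm m ξb‖ ≤ (5 / Real.sin (ω/4)) * ‖f ξa - f ξb‖ + 4 * ‖ξa - ξb‖ := by
    intro ξa hsa ξb hsb va vb hma hmb hga hgb hfma hfmb
    rcases le_total ξa.arg ξb.arg with h | h
    · exact harcO ξa hsa ξb hsb va vb hma hmb h hga hgb hfma hfmb
    · rw [norm_sub_rev (fm m ξa) (fm m ξb), norm_sub_rev (f ξa) (f ξb),
        norm_sub_rev ξa ξb]
      exact harcO ξb hsb ξa hsa vb va hmb hma h hgb hga hfmb hfma
  -- mixed estimate : ξa in a gap, ξb on segT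
  have hmix : ∀ ξa ∈ Metric.sphere (0:ℂ) 1, ∀ ξb ∈ Metric.sphere (0:ℂ) 1,
      ξa ∉ K → ξa.arg ∈ Set.Ioo (-ω) ω → ξb ∈ segT ω →
      ‖fm m ξa - fm m ξb‖ ≤ (5 / Real.sin (ω/4)) * ‖f ξa - f ξb‖ + 4 * ‖ξa - ξb‖ := by
    intro ξa hsa ξb hsb hka hioa hTb
    obtain ⟨v, hgood, hfmv, bd1, bd2, bd3, bd4⟩ := hGdata ξa hsa hka hioa
    set θ := ξa.arg with hθdef
    set ψ := φ θ with hψdef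
    have hθmem : θ ∈ Set.Icc (-ω) ω := ⟨le_of_lt hioa.1, le_of_lt hioa.2⟩
    have hrψ := hφmem θ hθmem
    simp only [Set.mem_Icc] at hrψ
    have hfa : f ξa = Complex.exp ((ψ:ℝ) * Complex.I) := by
      conv_lhs => rw [sphere_eq_expI_arg hsa]
      exact hφ θ hθmem
    have hfmb : fm m ξb = f ξb := hfm_eq m hm (Set.mem_union_left _ hTb)
    have hbase : f ξb ∈ segBase ω := hTim ▸ Set.mem_image_of_mem f hTb
    obtain ⟨hbre, hbim, hbeq⟩ := segBase_decode hbase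
    set τ := (f ξb).im with hτdef
    have hτr := abs_le.mp hbim
    have hargb : ω ≤ |ξb.arg| := by
      obtain ⟨t', ht'm, ht'a, ht'e⟩ := hTb
      rcases eq_or_lt_of_le ht'm.1 with heq | hlt
      · have hbm1 : ξb = -1 := by
          rw [ht'e, ← heq,
            show ((-Real.pi : ℝ):ℂ) * Complex.I = -(Real.pi * Complex.I) by push_cast; ring,
            Complex.exp_neg, Complex.exp_pi_mul_I]
          norm_num
        rw [hbm1, Complex.arg_neg_one, _root_.abs_of_pos hπ]
        linarith
      · have : ξb.arg = t' := by rw [ht'e]; exact arg_expI hlt ht'm.2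
        rw [this]; exact ht'a
    have hsign := tau_sign hω1 hω2 hfc hTinj hTim hb1 hb2 hb3 ξb.arg
      (Complex.neg_pi_lt_arg ξb).le (Complex.arg_le_pi ξb) hargb
    have hbe : ξb = Complex.exp ((ξb.arg : ℝ) * Complex.I) := sphere_eq_expI_arg hsb
    rw [← hbe] at hsign
    rcases le_or_gt ‖ξa - ξb‖ (1/2 : ℝ) with hsmall | hbig
    · -- small chord case
      have hsplit : ‖fm m ξa - fm m ξb‖ ≤ |v - ψ| + ‖f ξa - f ξb‖ := by
        have he : fm m ξa - fm m ξb = (fm m ξa - f ξa) + (f ξa - fm m ξb) := by ring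
        rw [he]
        have h1 : ‖fm m ξa - f ξa‖ ≤ |v - ψ| := by
          rw [hfmv, hfa]; exact chord_le_angle v ψ
        have h2 : ‖f ξa - fm m ξb‖ = ‖f ξa - f ξb‖ := by rw [hfmb]
        calc ‖(fm m ξa - f ξa) + (f ξa - fm m ξb)‖
            ≤ ‖fm m ξa - f ξa‖ + ‖f ξa - fm m ξb‖ := norm_add_le _ _
        _ ≤ |v - ψ| + ‖f ξa - f ξb‖ := by rw [h2]; linarith
      have hF0 : (0:ℝ) ≤ ‖f ξa - f ξb‖ := norm_nonneg _
      have hX0 : (0:ℝ) ≤ ‖ξa - ξb‖ := norm_nonneg _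
      rcases le_or_gt 0 ξb.arg with hup | hdn
      · -- upper side
        have htb : ω ≤ ξb.arg := by rwa [_root_.abs_of_nonneg hup] at hargb
        have hτ0 : 0 ≤ τ := hsign.1 hup
        have hdle : ξb.arg - θ ≤ Real.pi := by
          by_contra hcon
          push_neg at hcon
          have hXe : ‖ξa - ξb‖ = 2 * |Real.sin ((θ - ξb.arg)/2)| := by
            conv_lhs => rw [sphere_eq_expI_arg hsa, hbe]
            exact chord_formula θ ξb.arg
          set x := (ξb.arg - θ)/2 with hx
          have hx1 : Real.pi/2 < x := by rw [hx]; linarith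
          have hx2 : x ≤ Real.pi/2 + ω/2 := by
            rw [hx]; have := Complex.arg_le_pi ξb; have := hioa.1; linarith
          have hsinx : Real.sqrt 2 / 2 ≤ Real.sin x := by
            have e1 : Real.sin x = Real.cos (x - Real.pi/2) := by
              rw [show x - Real.pi/2 = -(Real.pi/2 - x) by ring, Real.cos_neg,
                Real.cos_pi_div_two_sub]
            rw [e1, ← Real.cos_pi_div_four]
            exact Real.cos_le_cos_of_nonneg_of_le_pi (by linarith) (by linarith) (by linarith)
          have hsq2 : (1:ℝ) < Real.sqrt 2 := by
            nlinarith [Real.sq_sqrt (by norm_num : (0:ℝ) ≤ 2), Real.sqrt_nonneg 2]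
          have hcontr : (1:ℝ) < ‖ξa - ξb‖ := by
            rw [hXe]
            have e2 : Real.sin ((θ - ξb.arg)/2) = - Real.sin x := by
              rw [hx, ← Real.sin_neg]; ring_nf
            rw [e2, abs_neg, _root_.abs_of_nonneg (by linarith)]
            linarith
          linarith
        have hXb : ξb.arg - θ ≤ Real.pi/2 * ‖ξa - ξb‖ := by
          have habs : |θ - ξb.arg| ≤ Real.pi := by
            rw [abs_le]; constructor <;> [linarith; linarith [hioa.2]]
          have h2 := angle_le_chord habs
          rw [← sphere_eq_expI_arg hsa, ← hbe] at h2
          calc ξb.arg - θ ≤ |θ - ξb.arg| := by rw [abs_sub_comm]; exact le_abs_self _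
          _ ≤ _ := h2
        have hG : Real.sin (ω/4) * (ω - ψ) ≤ 4 * ‖f ξa - f ξb‖ := by
          have h1 := lemmaG_upper hω1 hω2 hrψ.1 hrψ.2 hτ0 hτr.2
          rw [← hfa, ← hbeq] at h1
          exact h1
        have habs_v : |v - ψ| ≤ Real.pi/4 * (ω - ψ) + Real.pi/4 * (ω - θ) := by
          have p1 : 0 ≤ Real.pi/4 * (ω - ψ) := mul_nonneg (by linarith) (by linarith [hrψ.2])
          have p2 : 0 ≤ Real.pi/4 * (ω - θ) := mul_nonneg (by linarith) (by linarith [hioa.2])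
          rw [abs_sub_le_iff]
          constructor <;> linarith [bd1, bd2]
        have hT1 : Real.pi/4 * (ω - ψ) + ‖f ξa - f ξb‖
            ≤ (5 / Real.sin (ω/4)) * ‖f ξa - f ξb‖ := by
          rw [show (5 / Real.sin (ω/4)) * ‖f ξa - f ξb‖
              = 5 * ‖f ξa - f ξb‖ / Real.sin (ω/4) by ring, le_div_iff₀ hs]
          have k1 := mul_le_mul_of_nonneg_left hG (by linarith : (0:ℝ) ≤ Real.pi/4)
          have k2 := mul_le_mul_of_nonneg_right hπ4 hF0
          have k3 := mul_le_mul_of_nonneg_left hs1 hF0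
          nlinarith [mul_nonneg hF0 hs.le]
        have hT2 : Real.pi/4 * (ω - θ) ≤ 4 * ‖ξa - ξb‖ := by
          have h1 : ω - θ ≤ ξb.arg - θ := by linarith
          have h2 : Real.pi/4 * (ω - θ) ≤ Real.pi/4 * (Real.pi/2 * ‖ξa - ξb‖) :=
            mul_le_mul_of_nonneg_left (le_trans h1 hXb) (by linarith)
          nlinarith [mul_nonneg (mul_nonneg (by linarith : (0:ℝ) ≤ 4 - Real.pi)
            (by linarith : (0:ℝ) ≤ 4 + Real.pi)) hX0]
        linarith
      · -- lower side
        have htb : ξb.arg ≤ -ω := by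
          rw [_root_.abs_of_neg hdn] at hargb; linarith
        have hτ0 : τ ≤ 0 := hsign.2 (le_of_lt hdn)
        have hdle : θ - ξb.arg ≤ Real.pi := by
          by_contra hcon
          push_neg at hcon
          have hXe : ‖ξa - ξb‖ = 2 * |Real.sin ((θ - ξb.arg)/2)| := by
            conv_lhs => rw [sphere_eq_expI_arg hsa, hbe]
            exact chord_formula θ ξb.arg
          set x := (θ - ξb.arg)/2 with hx
          have hx1 : Real.pi/2 < x := by rw [hx]; linarith
          have hx2 : x ≤ Real.pi/2 + ω/2 := by
            rw [hx]; have := Complex.neg_pi_lt_arg ξb; have := hioa.2; linarith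
          have hsinx : Real.sqrt 2 / 2 ≤ Real.sin x := by
            have e1 : Real.sin x = Real.cos (x - Real.pi/2) := by
              rw [show x - Real.pi/2 = -(Real.pi/2 - x) by ring, Real.cos_neg,
                Real.cos_pi_div_two_sub]
            rw [e1, ← Real.cos_pi_div_four]
            exact Real.cos_le_cos_of_nonneg_of_le_pi (by linarith) (by linarith) (by linarith)
          have hsq2 : (1:ℝ) < Real.sqrt 2 := by
            nlinarith [Real.sq_sqrt (by norm_num : (0:ℝ) ≤ 2), Real.sqrt_nonneg 2]
          have hcontr : (1:ℝ) < ‖ξa - ξb‖ := by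
            rw [hXe, _root_.abs_of_nonneg (by linarith : (0:ℝ) ≤ Real.sin x)]
            linarith
          linarith
        have hXb : θ - ξb.arg ≤ Real.pi/2 * ‖ξa - ξb‖ := by
          have habs : |θ - ξb.arg| ≤ Real.pi := by
            rw [abs_le]; constructor <;> [linarith [hioa.1]; linarith]
          have h2 := angle_le_chord habs
          rw [← sphere_eq_expI_arg hsa, ← hbe] at h2
          calc θ - ξb.arg ≤ |θ - ξb.arg| := le_abs_self _
          _ ≤ _ := h2
        have hG : Real.sin (ω/4) * (ω + ψ) ≤ 4 * ‖f ξa - f ξb‖ := by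
          have h1 := lemmaG_lower hω1 hω2 hrψ.1 hrψ.2 hτ0 hτr.1
          rw [← hfa, ← hbeq] at h1
          exact h1
        have habs_v : |v - ψ| ≤ Real.pi/4 * (ω + ψ) + Real.pi/4 * (ω + θ) := by
          have p1 : 0 ≤ Real.pi/4 * (ω + ψ) := mul_nonneg (by linarith) (by linarith [hrψ.1])
          have p2 : 0 ≤ Real.pi/4 * (ω + θ) := mul_nonneg (by linarith) (by linarith [hioa.1])
          rw [abs_sub_le_iff]
          constructor
          · have : Real.pi/4 * (θ + ω) = Real.pi/4 * (ω + θ) := by ring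
            linarith [bd3]
          · have : Real.pi/4 * (ψ + ω) = Real.pi/4 * (ω + ψ) := by ring
            linarith [bd4]
        have hT1 : Real.pi/4 * (ω + ψ) + ‖f ξa - f ξb‖
            ≤ (5 / Real.sin (ω/4)) * ‖f ξa - f ξb‖ := by
          rw [show (5 / Real.sin (ω/4)) * ‖f ξa - f ξb‖
              = 5 * ‖f ξa - f ξb‖ / Real.sin (ω/4) by ring, le_div_iff₀ hs]
          have k1 := mul_le_mul_of_nonneg_left hG (by linarith : (0:ℝ) ≤ Real.pi/4)
          have k2 := mul_le_mul_of_nonneg_right hπ4 hF0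
          have k3 := mul_le_mul_of_nonneg_left hs1 hF0
          nlinarith [mul_nonneg hF0 hs.le]
        have hT2 : Real.pi/4 * (ω + θ) ≤ 4 * ‖ξa - ξb‖ := by
          have h1 : ω + θ ≤ θ - ξb.arg := by linarith
          have h2 : Real.pi/4 * (ω + θ) ≤ Real.pi/4 * (Real.pi/2 * ‖ξa - ξb‖) :=
            mul_le_mul_of_nonneg_left (le_trans h1 hXb) (by linarith)
          nlinarith [mul_nonneg (mul_nonneg (by linarith : (0:ℝ) ≤ 4 - Real.pi)
            (by linarith : (0:ℝ) ≤ 4 + Real.pi)) hX0]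
        linarith
    · -- big chord case
      have hna : ‖fm m ξa‖ = 1 := by
        rw [hfmv]; exact Complex.norm_exp_ofReal_mul_I v
      have hnb : ‖fm m ξb‖ ≤ 1 := by
        rw [hfmb]
        have h2 : ‖f ξb‖ ^ 2 = Real.cos ω ^2 + τ^2 := by
          rw [Complex.sq_norm, Complex.normSq_apply, hbre]
          ring
        have h3 : τ^2 ≤ Real.sin ω ^2 := sq_le_sq' hτr.1 hτr.2
        have h4 := Real.sin_sq_add_cos_sq ω
        show ‖f ξb‖ ≤ 1
        nlinarith [norm_nonneg (f ξb)]
      have hLHS : ‖fm m ξa - fm m ξb‖ ≤ 2 := by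
        calc ‖fm m ξa - fm m ξb‖ ≤ ‖fm m ξa‖ + ‖fm m ξb‖ := norm_sub_le _ _
        _ ≤ 2 := by rw [hna]; linarith
      have ht1 : 0 ≤ (5 / Real.sin (ω/4)) * ‖f ξa - f ξb‖ :=
        mul_nonneg (div_nonneg (by norm_num) hs.le) (norm_nonneg _)
      linarith
  -- final dispatch
  rcases hdich ξ₁ hξ₁ with h1 | h1
  · rcases hdich ξ₂ hξ₂ with h2 | h2
    · -- both solid
      rw [hfm_eq m hm h1, hfm_eq m hm h2]
      have k1 := mul_le_mul_of_nonneg_right h5s1 (norm_nonneg (f ξ₁ - f ξ₂))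
      have k2 := norm_nonneg (ξ₁ - ξ₂)
      linarith
    · -- ξ₁ solid, ξ₂ gap
      rcases h1 with hT1c | hK1c
      · rw [norm_sub_rev (fm m ξ₁) (fm m ξ₂), norm_sub_rev (f ξ₁) (f ξ₂),
          norm_sub_rev ξ₁ ξ₂]
        exact hmix ξ₂ hξ₂ ξ₁ hξ₁ h2.1 h2.2 hT1c
      · obtain ⟨hg1, hfm1⟩ := hKdata ξ₁ hK1c
        obtain ⟨v₂, hg2, hfm2, _, _, _, _⟩ := hGdata ξ₂ hξ₂ h2.1 h2.2
        exact harc ξ₁ hξ₁ ξ₂ hξ₂ _ _ (hKrep ξ₁ hK1c).1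
          ⟨le_of_lt h2.2.1, le_of_lt h2.2.2⟩ hg1 hg2 hfm1 hfm2
  · rcases hdich ξ₂ hξ₂ with h2 | h2
    · -- ξ₁ gap, ξ₂ solid
      rcases h2 with hT2c | hK2c
      · exact hmix ξ₁ hξ₁ ξ₂ hξ₂ h1.1 h1.2 hT2c
      · obtain ⟨hg2, hfm2⟩ := hKdata ξ₂ hK2c
        obtain ⟨v₁, hg1, hfm1, _, _, _, _⟩ := hGdata ξ₁ hξ₁ h1.1 h1.2
        exact harc ξ₁ hξ₁ ξ₂ hξ₂ _ _ ⟨le_of_lt h1.2.1, le_of_lt h1.2.2⟩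
          (hKrep ξ₂ hK2c).1 hg1 hg2 hfm1 hfm2
    · -- both gaps
      obtain ⟨v₁, hg1, hfm1, _, _, _, _⟩ := hGdata ξ₁ hξ₁ h1.1 h1.2
      obtain ⟨v₂, hg2, hfm2, _, _, _, _⟩ := hGdata ξ₂ hξ₂ h2.1 h2.2
      exact harc ξ₁ hξ₁ ξ₂ hξ₂ _ _ ⟨le_of_lt h1.2.1, le_of_lt h1.2.2⟩
        ⟨le_of_lt h2.2.1, le_of_lt h2.2.2⟩ hg1 hg2 hfm1 hfm2
end
end
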